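/- Let (X,T) be a pseudo-minimal flow or homeomorphism on a compact metric space satisfying assumption (A). Then the following are equivalent: (1) every point of X_M (the set of points with dense orbit) is an equicontinuity point; (2) there exists at least one equicontinuity point; (3) (X,T) is an equicontinuous minimal system. -/

import Mathlib

/-!
The argument is shadowing: if the orbit of `y` passes `δ`-close to an equicontinuity point `x`,
then from that time on it `ε`-shadows the orbit of `x`. Hence `y` is again an equicontinuity
point, and has dense orbit if `x` has. In particular a point `u` of the open set `U` is an
equicontinuity point with dense orbit.

It remains to show that every orbit comes arbitrarily close to `u`. As `X` is perfect, `u` returns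
near itself at arbitrarily large times, and by shadowing so does every point of a closed ball `B`
around `u` inside `U`. By compactness of `B` these return times have bounded gaps `≤ L`, so the
forward orbit of `u` lies in the closed set `⋃ j ≤ L, f⁻ʲ (closedBall u ρ)`; this forward orbit
is dense, so that set is all of `X`. Equicontinuity at every point of the compact space `X` is
uniform.
-/

open Topology

/-- `x` is a (two-sided) equicontinuity point of the homeomorphism `f`. -/
def IsEqcPoint {X : Type*} [MetricSpace X] (f : X ≃ₜ X) (x : X) : Prop :=
  ∀ ε > (0 : ℝ), ∃ δ > (0 : ℝ), ∀ y : X, dist x y ≤ δ →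
    ∀ n : ℤ, dist ((f.toEquiv ^ n) x) ((f.toEquiv ^ n) y) < ε

section

open Set Metric Filter

namespace Homeomorph

variable {X : Type*} [TopologicalSpace X]

theorem toEquiv_zpow (f : X ≃ₜ X) (n : ℤ) : (f ^ n).toEquiv = f.toEquiv ^ n :=
  map_zpow (⟨⟨Homeomorph.toEquiv, rfl⟩, fun _ _ => rfl⟩ : (X ≃ₜ X) →* Equiv.Perm X) f n

theorem continuous_toEquiv_zpow (f : X ≃ₜ X) (n : ℤ) : Continuous (f.toEquiv ^ n) := by
  rw [← toEquiv_zpow]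
  exact (f ^ n).continuous

end Homeomorph

theorem Equiv.Perm.zpow_add_apply {α : Type*} (σ : Equiv.Perm α) (m n : ℤ) (a : α) :
    (σ ^ (m + n)) a = (σ ^ m) ((σ ^ n) a) := by
  rw [zpow_add, Equiv.Perm.mul_apply]

theorem mapClusterPt_atTop_iff_forall_exists_dist_lt {X ι : Type*} [PseudoMetricSpace X]
    [SemilatticeSup ι] [Nonempty ι] {u : ι → X} {x : X} :
    MapClusterPt x atTop u ↔ ∀ ρ > 0, ∀ M, ∃ τ, M ≤ τ ∧ dist (u τ) x < ρ := by
  simp [nhds_basis_ball.mapClusterPt_iff_frequently, frequently_atTop]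

theorem Nat.exists_between_of_bounded_steps {P : ℕ → Prop} {L : ℕ} (h0 : P 0)
    (hstep : ∀ t, P t → ∃ τ, 0 < τ ∧ τ ≤ L ∧ P (t + τ)) (n : ℕ) :
    ∃ t, n < t ∧ t ≤ n + L ∧ P t := by
  classical
  set t₀ := Nat.findGreatest P n
  obtain ⟨τ, hτ, hτL, hPτ⟩ := hstep t₀ (Nat.findGreatest_spec (zero_le n) h0)
  have hn : n < t₀ + τ := by
    by_contra! h
    exact Nat.findGreatest_is_greatest (by omega) h hPτ
  exact ⟨t₀ + τ, hn, by have := Nat.findGreatest_le (P := P) n; omega, hPτ⟩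

namespace IsEqcPoint

variable {X : Type*} [MetricSpace X] {f : X ≃ₜ X} {x y : X}

theorem of_mem_closure_orbit (hx : IsEqcPoint f x)
    (hxy : x ∈ closure (range fun n : ℤ => (f.toEquiv ^ n) y)) : IsEqcPoint f y := by
  intro ε hε
  obtain ⟨δ, hδ, hshadow⟩ := hx (ε / 2) (half_pos hε)
  obtain ⟨k, hk⟩ := mem_closure_range_iff.1 hxy (δ / 2) (half_pos hδ)
  obtain ⟨η, hη, hcont⟩ := Metric.continuousAt_iff.1
    ((f.continuous_toEquiv_zpow k).continuousAt (x := y)) (δ / 2) (half_pos hδ)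
  refine ⟨η / 2, half_pos hη, fun z hz n => ?_⟩
  have hkz : dist x ((f.toEquiv ^ k) z) ≤ δ := by
    have hyz := hcont (show dist z y < η by rw [dist_comm]; linarith)
    rw [dist_comm] at hyz
    linarith [dist_triangle x ((f.toEquiv ^ k) y) ((f.toEquiv ^ k) z)]
  have hy := hshadow _ (hk.le.trans (half_le_self hδ.le)) (n - k)
  have hz := hshadow _ hkz (n - k)
  rw [← Equiv.Perm.zpow_add_apply, sub_add_cancel] at hy hz
  calc dist ((f.toEquiv ^ n) y) ((f.toEquiv ^ n) z)
      ≤ dist ((f.toEquiv ^ (n - k)) x) ((f.toEquiv ^ n) y)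
        + dist ((f.toEquiv ^ (n - k)) x) ((f.toEquiv ^ n) z) := dist_triangle_left _ _ _
    _ < ε := by linarith

theorem denseRange_orbit (hx : IsEqcPoint f x)
    (hxd : DenseRange fun n : ℤ => (f.toEquiv ^ n) x)
    (hxy : x ∈ closure (range fun n : ℤ => (f.toEquiv ^ n) y)) :
    DenseRange fun n : ℤ => (f.toEquiv ^ n) y := by
  refine Metric.denseRange_iff.2 fun w ε hε => ?_
  obtain ⟨δ, hδ, hshadow⟩ := hx (ε / 2) (half_pos hε)
  obtain ⟨k, hk⟩ := mem_closure_range_iff.1 hxy δ hδ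
  obtain ⟨n, hn⟩ := Metric.denseRange_iff.1 hxd w (ε / 2) (half_pos hε)
  have hy := hshadow _ hk.le n
  rw [← Equiv.Perm.zpow_add_apply] at hy
  exact ⟨n + k, by linarith [dist_triangle w ((f.toEquiv ^ n) x) ((f.toEquiv ^ (n + k)) y)]⟩

theorem mapClusterPt_orbit_self [PerfectSpace X] (hx : IsEqcPoint f x)
    (hxd : DenseRange fun n : ℤ => (f.toEquiv ^ n) x) :
    MapClusterPt x atTop fun n : ℤ => (f.toEquiv ^ n) x := by
  refine mapClusterPt_atTop_iff_forall_exists_dist_lt.2 fun η hη M => ?_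
  obtain ⟨δ, hδ, hshadow⟩ := hx η hη
  set ρ := min δ η
  have hρ : 0 < ρ := lt_min hδ hη
  -- `X` is perfect, so the dense orbit visits `ball x ρ` at infinitely many times; a visit at a
  -- time `n < 0` gives one at `-n` by equicontinuity at `x`.
  have hpoints : (range (fun n : ℤ => (f.toEquiv ^ n) x) ∩ ball x ρ).Infinite := by
    intro hfin
    refine infinite_of_mem_nhds x (ball_mem_nhds x hρ) (hfin.subset ?_)
    calc ball x ρ ⊆ closure (ball x ρ ∩ _) := hxd.open_subset_closure_inter isOpen_ball
      _ = _ := by rw [inter_comm]; exact hfin.isClosed.closure_eq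
  have htimes : {n : ℤ | (f.toEquiv ^ n) x ∈ ball x ρ}.Infinite := by
    refine Set.Infinite.of_image (fun n : ℤ => (f.toEquiv ^ n) x) (hpoints.mono ?_)
    rintro _ ⟨⟨n, rfl⟩, hn⟩
    exact ⟨n, hn, rfl⟩
  obtain ⟨n, hn, hnM⟩ := htimes.exists_notMem_finset (Finset.Icc (-|M|) |M|)
  have hnρ : dist ((f.toEquiv ^ n) x) x < ρ := hn
  rw [Finset.mem_Icc, not_and_or, not_le, not_le] at hnM
  rcases hnM with hneg | hpos
  · refine ⟨-n, by linarith [le_abs_self M], ?_⟩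
    have := hshadow _ (by rw [dist_comm]; exact hnρ.le.trans (min_le_left _ _)) (-n)
    rwa [← Equiv.Perm.zpow_add_apply, neg_add_cancel, zpow_zero,
      Equiv.Perm.one_apply] at this
  · exact ⟨n, by linarith [le_abs_self M], hnρ.trans_le (min_le_right _ _)⟩

theorem mapClusterPt_orbit (hx : IsEqcPoint f x)
    (hrec : MapClusterPt x atTop fun n : ℤ => (f.toEquiv ^ n) x)
    (hxy : x ∈ closure (range fun n : ℤ => (f.toEquiv ^ n) y)) :
    MapClusterPt x atTop fun n : ℤ => (f.toEquiv ^ n) y := by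
  refine mapClusterPt_atTop_iff_forall_exists_dist_lt.2 fun ρ hρ M => ?_
  obtain ⟨δ, hδ, hshadow⟩ := hx (ρ / 2) (half_pos hρ)
  obtain ⟨k, hk⟩ := mem_closure_range_iff.1 hxy δ hδ
  obtain ⟨q, hqM, hq⟩ :=
    mapClusterPt_atTop_iff_forall_exists_dist_lt.1 hrec (ρ / 2) (half_pos hρ) (M - k)
  have hy := hshadow _ hk.le q
  rw [← Equiv.Perm.zpow_add_apply] at hy
  exact ⟨q + k, by linarith,
    by linarith [dist_triangle_left ((f.toEquiv ^ (q + k)) y) x ((f.toEquiv ^ q) x)]⟩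

theorem denseRange_forwardOrbit (hx : IsEqcPoint f x)
    (hxd : DenseRange fun n : ℤ => (f.toEquiv ^ n) x)
    (hrec : MapClusterPt x atTop fun n : ℤ => (f.toEquiv ^ n) x) :
    DenseRange fun n : ℕ => (f.toEquiv ^ (n : ℤ)) x := by
  refine Metric.denseRange_iff.2 fun w ε hε => ?_
  obtain ⟨n, hn⟩ := Metric.denseRange_iff.1 hxd w (ε / 2) (half_pos hε)
  obtain ⟨δ, hδ, hshadow⟩ := hx (ε / 2) (half_pos hε)
  obtain ⟨q, hqn, hq⟩ := mapClusterPt_atTop_iff_forall_exists_dist_lt.1 hrec δ hδ (-n)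
  have hx' := hshadow _ (by rw [dist_comm]; exact hq.le) n
  rw [← Equiv.Perm.zpow_add_apply] at hx'
  refine ⟨(n + q).toNat, ?_⟩
  rw [Int.toNat_of_nonneg (by linarith)]
  linarith [dist_triangle w ((f.toEquiv ^ n) x) ((f.toEquiv ^ (n + q)) x)]

end IsEqcPoint

section Returns

variable {X : Type*} [MetricSpace X] (f : X ≃ₜ X)

theorem IsCompact.exists_bound_return_time {K V : Set X} (hK : IsCompact K) (hV : IsOpen V)
    (hret : ∀ z ∈ K, ∃ τ : ℕ, 0 < τ ∧ (f.toEquiv ^ (τ : ℤ)) z ∈ V) :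
    ∃ L : ℕ, ∀ z ∈ K, ∃ τ : ℕ, 0 < τ ∧ τ ≤ L ∧ (f.toEquiv ^ (τ : ℤ)) z ∈ V := by
  let W : ℕ → Set X := fun L => ⋃ τ ∈ Finset.Ioc 0 L, (f.toEquiv ^ (τ : ℤ)) ⁻¹' V
  have hW : Monotone W := fun L L' hLL' =>
    biUnion_subset_biUnion_left fun τ hτ => by
      simp only [Finset.coe_Ioc, mem_Ioc] at hτ ⊢
      omega
  obtain ⟨L, hL⟩ := hK.elim_directed_cover W
    (fun L => isOpen_biUnion fun τ _ => hV.preimage (f.continuous_toEquiv_zpow τ))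
    (fun z hz => by
      obtain ⟨τ, hτ, hzτ⟩ := hret z hz
      exact mem_iUnion.2 ⟨τ, mem_biUnion (by simpa using hτ) hzτ⟩)
    hW.directed_le
  refine ⟨L, fun z hz => ?_⟩
  obtain ⟨τ, hτ, hzτ⟩ := mem_iUnion₂.1 (hL hz)
  simp only [Finset.mem_Ioc] at hτ
  exact ⟨τ, hτ.1, hτ.2, hzτ⟩

variable {f} {x : X}

theorem exists_bounded_gaps_returns [CompactSpace X] {r : ℝ} (hr : 0 < r)
    (hret : ∀ z ∈ closedBall x r, MapClusterPt x atTop fun n : ℤ => (f.toEquiv ^ n) z)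
    {ρ : ℝ} (hρ : 0 < ρ) :
    ∃ L : ℕ, ∀ n : ℕ, ∃ j ≤ L, dist ((f.toEquiv ^ ((n + j : ℕ) : ℤ)) x) x < ρ := by
  -- returns into `ball x ρ'` land in `closedBall x r` again, so they can be chained
  set ρ' := min ρ r
  have hρ' : 0 < ρ' := lt_min hρ hr
  obtain ⟨L, hL⟩ := isClosed_closedBall.isCompact.exists_bound_return_time f isOpen_ball
    fun z hz => by
      obtain ⟨τ, hτ, hzτ⟩ :=
        mapClusterPt_atTop_iff_forall_exists_dist_lt.1 (hret z hz) ρ' hρ' 1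
      lift τ to ℕ using by omega
      exact ⟨τ, by omega, hzτ⟩
  refine ⟨L, fun n => ?_⟩
  obtain ⟨t, hnt, htn, ht⟩ := Nat.exists_between_of_bounded_steps
    (P := fun t : ℕ => (f.toEquiv ^ (t : ℤ)) x ∈ ball x ρ') (by simpa using hρ')
    (fun t ht => by
      obtain ⟨τ, hτ, hτL, hxτ⟩ := hL _ (ball_subset_closedBall.trans
        (closedBall_subset_closedBall (min_le_right ρ r)) ht)
      refine ⟨τ, hτ, hτL, ?_⟩
      rwa [← Equiv.Perm.zpow_add_apply, add_comm, ← Nat.cast_add] at hxτ) n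
  refine ⟨t - n, by omega, ?_⟩
  rw [Nat.add_sub_cancel' hnt.le]
  exact ht.trans_le (min_le_left _ _)

theorem mem_closure_orbit_of_bounded_gaps
    (hfwd : DenseRange fun n : ℕ => (f.toEquiv ^ (n : ℤ)) x)
    (hgaps : ∀ ρ > 0, ∃ L : ℕ, ∀ n : ℕ, ∃ j ≤ L,
      dist ((f.toEquiv ^ ((n + j : ℕ) : ℤ)) x) x < ρ)
    (y : X) : x ∈ closure (range fun n : ℤ => (f.toEquiv ^ n) y) := by
  refine mem_closure_range_iff.2 fun ρ hρ => ?_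
  obtain ⟨L, hL⟩ := hgaps (ρ / 2) (half_pos hρ)
  let A := ⋃ j ∈ Finset.range (L + 1), (f.toEquiv ^ (j : ℤ)) ⁻¹' closedBall x (ρ / 2)
  have hA : IsClosed A := (Finset.range (L + 1)).finite_toSet.isClosed_biUnion
    fun j _ => isClosed_closedBall.preimage (f.continuous_toEquiv_zpow j)
  have horbit : range (fun n : ℕ => (f.toEquiv ^ (n : ℤ)) x) ⊆ A := by
    rintro _ ⟨n, rfl⟩
    obtain ⟨j, hjL, hj⟩ := hL n
    refine mem_biUnion (x := j) (by simpa [Nat.lt_succ_iff] using hjL) ?_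
    rw [mem_preimage, ← Equiv.Perm.zpow_add_apply, add_comm, ← Nat.cast_add]
    exact hj.le
  obtain ⟨j, -, hj⟩ := mem_iUnion₂.1 (hA.closure_subset_iff.2 horbit (hfwd y))
  exact ⟨j, by rw [dist_comm]; exact (mem_closedBall.1 hj).trans_lt (half_lt_self hρ)⟩

end Returns

variable {X : Type*} [MetricSpace X] {f : X ≃ₜ X}

theorem IsEqcPoint.mem_closure_orbit [CompactSpace X] [PerfectSpace X] {x : X}
    (hx : IsEqcPoint f x) {r : ℝ} (hr : 0 < r)
    (hball : ∀ z ∈ closedBall x r, DenseRange fun n : ℤ => (f.toEquiv ^ n) z) (y : X) :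
    x ∈ closure (range fun n : ℤ => (f.toEquiv ^ n) y) := by
  have hxd := hball x (mem_closedBall_self hr.le)
  have hrec := hx.mapClusterPt_orbit_self hxd
  refine mem_closure_orbit_of_bounded_gaps (hx.denseRange_forwardOrbit hxd hrec)
    (fun ρ hρ => ?_) y
  exact exists_bounded_gaps_returns hr
    (fun z hz => hx.mapClusterPt_orbit hrec (hball z hz x)) hρ

theorem IsEqcPoint.equicontinuousAt {x : X} (hx : IsEqcPoint f x) :
    EquicontinuousAt (fun n : ℤ => ⇑(f.toEquiv ^ n)) x :=
  Metric.equicontinuousAt_iff.2 fun ε hε => by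
    obtain ⟨δ, hδ, h⟩ := hx ε hε
    exact ⟨δ, hδ, fun y hy => h y (by rw [dist_comm]; exact hy.le)⟩

theorem uniformEquicontinuous_of_forall_isEqcPoint [CompactSpace X]
    (h : ∀ x, IsEqcPoint f x) :
    ∀ ε > (0 : ℝ), ∃ δ > (0 : ℝ), ∀ x y : X, dist x y ≤ δ →
      ∀ n : ℤ, dist ((f.toEquiv ^ n) x) ((f.toEquiv ^ n) y) < ε := by
  intro ε hε
  obtain ⟨δ, hδ, hunif⟩ := Metric.uniformEquicontinuous_iff.1
    (CompactSpace.uniformEquicontinuous_of_equicontinuous fun x => (h x).equicontinuousAt) ε hε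
  exact ⟨δ / 2, half_pos hδ, fun x y hxy => hunif x y (hxy.trans_lt (half_lt_self hδ))⟩

end

/-- For a pseudo-minimal homeomorphism of a compact perfect metric space, the
following are equivalent: every point of `X_M` is an equicontinuity point; some point
is an equicontinuity point; the system is equicontinuous and minimal. -/
theorem stmt11 {X : Type*} [MetricSpace X] [CompactSpace X] [PerfectSpace X]
    (f : X ≃ₜ X)
    (hpm : ∃ U : Set X, IsOpen U ∧ U.Nonempty ∧
      ∀ x ∈ U, Dense (Set.range fun n : ℤ => (f.toEquiv ^ n) x)) :
    List.TFAE
      [∀ x ∈ {x : X | Dense (Set.range fun n : ℤ => (f.toEquiv ^ n) x)},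
          IsEqcPoint f x,
       ∃ x : X, IsEqcPoint f x,
       (∀ ε > (0 : ℝ), ∃ δ > (0 : ℝ), ∀ x y : X, dist x y ≤ δ →
          ∀ n : ℤ, dist ((f.toEquiv ^ n) x) ((f.toEquiv ^ n) y) < ε) ∧
        ∀ x : X, Dense (Set.range fun n : ℤ => (f.toEquiv ^ n) x)] := by
  obtain ⟨U, hUo, ⟨u, hu⟩, hUd⟩ := hpm
  tfae_have 1 → 2 := fun h => ⟨u, h u (hUd u hu)⟩
  tfae_have 2 → 3 := by
    rintro ⟨x₀, hx₀⟩
    have hueq : IsEqcPoint f u := hx₀.of_mem_closure_orbit (hUd u hu x₀)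
    obtain ⟨r, hr, hrU⟩ := Metric.isOpen_iff.1 hUo u hu
    have hnear := hueq.mem_closure_orbit (half_pos hr) fun z hz =>
      hUd z (hrU (Metric.closedBall_subset_ball (half_lt_self hr) hz))
    exact ⟨uniformEquicontinuous_of_forall_isEqcPoint fun y =>
      hueq.of_mem_closure_orbit (hnear y), fun y => hueq.denseRange_orbit (hUd u hu) (hnear y)⟩
  tfae_have 3 → 1 := fun ⟨hunif, _⟩ x _ ε hε => by
    obtain ⟨δ, hδ, h⟩ := hunif ε hε
    exact ⟨δ, hδ, fun y => h x y⟩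
  tfae_finish
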